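/- Let d ≥ 2 be even, let G be a finite group, and let (ρ_t)_{t∈T} be a complete family of irreducible unitary matrix representations of G with dimensions n_t. Let U be the matrix with rows indexed by triples (t,i,j) (t ∈ T, i,j ∈ Fin n_t) and columns indexed by G, with entries U_{(t,i,j),g} = (n_t/|G|)^{1/2} · ρ_t(g)_{ij}. Then: (1) U is unitary, i.e. U·U* = I; and (2) applying U to every mode of the group hypermatrix C^G(x) yields the block-diagonal hypermatrix B given by B_{(t₁,i₁,j₁),…,(t_d,i_d,j_d)} = (|G|/n_t)^{d/2−1} · (Σ_{g∈G} x_g ρ_t(g))_{i₁ j_d} if t₁ = ⋯ = t_d = t and j₁=i₂, j₂=i₃, …, j_{d−1}=i_d, and B = 0 at all other index tuples. That is, C^G(x) is unitarily equivalent to the direct sum ⊕_{t∈T} (|G|/n_t)^{d/2−1} · M^{(d)}_{ρ_t(x)} with ρ_t(x) = Σ_g x_g ρ_t(g). -/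

import Mathlib

/-- The group hypermatrix: entry at `(g₁, …, g_d)` is the variable `x_{g₁⋯g_d}`. -/
noncomputable def groupHyper (d : ℕ) (G : Type*) [Group G] :
    (Fin d → G) → MvPolynomial G ℂ :=
  fun g => MvPolynomial.X (List.ofFn g).prod
/-- The representation on `Fin m → ℂ` associated to a matrix representation. -/
noncomputable def matRep {G : Type*} [Monoid G] {m : ℕ}
    (ρ : G →* Matrix (Fin m) (Fin m) ℂ) : Representation ℂ G (Fin m → ℂ) :=
  (Matrix.toLinAlgEquiv'.toAlgHom.toRingHom.toMonoidHom).comp ρ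
/-- The matrix `Σ_g x_g ρ(g)` with entries in `MvPolynomial G ℂ`. -/
noncomputable def repMatrix {G : Type*} [Group G] [Fintype G] {m : ℕ}
    (ρ : G →* Matrix (Fin m) (Fin m) ℂ) :
    Matrix (Fin m) (Fin m) (MvPolynomial G ℂ) :=
  ∑ g : G, (MvPolynomial.X g : MvPolynomial G ℂ) • (ρ g).map (MvPolynomial.C : ℂ → MvPolynomial G ℂ)
/-- A complete family of irreducible unitary matrix representations of a finite group `G`:
each `ρ t g` is unitary, each `ρ t` is irreducible (the associated module over
`MonoidAlgebra ℂ G` is simple), the representations are pairwise non-isomorphic, and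
`Σ_t n_t² = |G|`. -/
structure IsCompleteIrrFamily (G : Type*) [Group G] [Fintype G]
    {T : Type*} [Fintype T] (n : T → ℕ)
    (ρ : ∀ t, G →* Matrix (Fin (n t)) (Fin (n t)) ℂ) : Prop where
  unitary : ∀ t g, ρ t g ∈ Matrix.unitaryGroup (Fin (n t)) ℂ
  irred : ∀ t, IsSimpleModule (MonoidAlgebra ℂ G) (matRep (ρ t)).asModule
  noniso : ∀ t t', t ≠ t' →
    IsEmpty ((matRep (ρ t)).asModule ≃ₗ[MonoidAlgebra ℂ G] (matRep (ρ t')).asModule)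
  sum_sq : ∑ t, (n t) ^ 2 = Fintype.card G


/-!
Identify the row `s` of `U` with the element `u_s = Σ_g U_{s,g} g` of the group algebra `ℂ[G]`.
Applying `U` to every mode of `C^G(x)` amounts to forming the product `u_{k₁} ⋯ u_{k_d}` in
`ℂ[G]` and reading the coefficient of `g` as the coefficient of `x_g`. By Schur's orthogonality
relations the matrix coefficients of the `ρ_t` convolve like matrix units, so the rows of `U` are
block-diagonal matrix units up to scale: `u_{(t,i,j)} u_{(t',k,l)} = 0` for `t ≠ t'`, and
`u_{(t,i,j)} u_{(t,k,l)} = δ_{jk} (|G|/n_t)^{1/2} u_{(t,i,l)}`. Hence the product vanishes unless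
the indices form a chain `j₁ = i₂, …, j_{d-1} = i_d` inside one block, where it equals
`(|G|/n_t)^{(d-1)/2} u_{(t,i₁,j_d)}`; as `u_{(t,i,l)}` carries the factor `(n_t/|G|)^{1/2}`
and `d` is even, the coefficient is the integer power `(|G|/n_t)^{d/2-1}`. The same orthogonality
relations give `U U* = 1`.
-/

section MatrixRepresentation

variable {G : Type*} [Group G] {ι κ R : Type*} [Fintype ι] [DecidableEq ι] [Fintype κ]
  [DecidableEq κ]

theorem Matrix.mul_single_one_mul_apply {l o : Type*} [NonAssocSemiring R]
    (A : Matrix l ι R) (B : Matrix κ o R) (i : l) (j : ι) (k : κ) (c : o) :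
    (A * Matrix.single j k (1 : R) * B) i c = A i j * B k c := by
  simp [Matrix.mul_apply, Matrix.single, ite_and]

theorem map_inv_eq_star_of_mem_unitaryGroup [CommRing R] [StarRing R] {ψ : G →* Matrix κ κ R}
    (hψ : ∀ g, ψ g ∈ Matrix.unitaryGroup κ R) (g : G) : ψ g⁻¹ = star (ψ g) :=
  left_inv_eq_right_inv (by rw [← map_mul, inv_mul_cancel, map_one])
    (Matrix.mem_unitaryGroup_iff.mp (hψ g))

variable [Fintype G]

theorem intertwines_sum_mul_mul_inv [Semiring R] (ρ : G →* Matrix ι ι R)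
    (ψ : G →* Matrix κ κ R) (X : Matrix ι κ R) (a : G) :
    ρ a * ∑ g, ρ g * X * ψ g⁻¹ = (∑ g, ρ g * X * ψ g⁻¹) * ψ a := by
  rw [Matrix.mul_sum, Matrix.sum_mul]
  refine Fintype.sum_equiv (Equiv.mulLeft a) _ _ fun g => ?_
  simp only [Equiv.coe_mulLeft, map_mul, Matrix.mul_assoc]
  rw [← map_mul ψ, mul_inv_rev, inv_mul_cancel_right]

variable [CommRing R] [StarRing R] {ρ : G →* Matrix ι ι R} {ψ : G →* Matrix κ κ R}

theorem sum_mul_single_mul_inv_apply (hψ : ∀ g, ψ g ∈ Matrix.unitaryGroup κ R)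
    (i j : ι) (k l : κ) :
    (∑ g, ρ g * Matrix.single j l (1 : R) * ψ g⁻¹) i k = ∑ g, ρ g i j * star (ψ g k l) := by
  simp [Matrix.sum_apply, Matrix.mul_single_one_mul_apply,
    map_inv_eq_star_of_mem_unitaryGroup hψ]

theorem sum_mul_apply_inv_mul (hψ : ∀ g, ψ g ∈ Matrix.unitaryGroup κ R)
    (i j : ι) (k l : κ) (h : G) :
    ∑ g, ρ g i j * ψ (g⁻¹ * h) k l = ∑ a, (∑ g, ρ g i j * star (ψ g a k)) * ψ h a l := by
  simp only [map_mul, map_inv_eq_star_of_mem_unitaryGroup hψ, Matrix.mul_apply,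
    Matrix.star_apply, Finset.mul_sum, Finset.sum_mul, mul_assoc]
  exact Finset.sum_comm

end MatrixRepresentation

section Schur

variable {G : Type*} [Group G] {m p : ℕ}
  {ρ : G →* Matrix (Fin m) (Fin m) ℂ} {ψ : G →* Matrix (Fin p) (Fin p) ℂ}

def intertwiningMapOfMatrix (M : Matrix (Fin m) (Fin p) ℂ) (hM : ∀ g, ρ g * M = M * ψ g) :
    (matRep ψ).IntertwiningMap (matRep ρ) where
  toLinearMap := Matrix.toLin' M
  isIntertwining' g := by
    change Matrix.toLin' M ∘ₗ Matrix.toLin' (ψ g) = Matrix.toLin' (ρ g) ∘ₗ Matrix.toLin' M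
    rw [← Matrix.toLin'_mul, ← Matrix.toLin'_mul, hM]

theorem eq_zero_of_intertwines_of_isEmpty
    [IsSimpleModule (MonoidAlgebra ℂ G) (matRep ρ).asModule]
    [IsSimpleModule (MonoidAlgebra ℂ G) (matRep ψ).asModule]
    (hno : IsEmpty ((matRep ψ).asModule ≃ₗ[MonoidAlgebra ℂ G] (matRep ρ).asModule))
    {M : Matrix (Fin m) (Fin p) ℂ} (hM : ∀ g, ρ g * M = M * ψ g) : M = 0 := by
  let f := Representation.IntertwiningMap.equivLinearMapAsModule (matRep ψ) (matRep ρ)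
    (intertwiningMapOfMatrix M hM)
  obtain hbij | hf := f.bijective_or_eq_zero
  · exact hno.elim (LinearEquiv.ofBijective f hbij)
  · refine Matrix.toLin'.injective (LinearMap.ext fun v => ?_)
    rw [map_zero, LinearMap.zero_apply]
    exact LinearMap.congr_fun hf v

theorem exists_eq_smul_one_of_intertwines
    [IsSimpleModule (MonoidAlgebra ℂ G) (matRep ρ).asModule]
    {M : Matrix (Fin m) (Fin m) ℂ} (hM : ∀ g, ρ g * M = M * ρ g) : ∃ c : ℂ, M = c • 1 := by
  have : (matRep ρ).IsIrreducible :=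
    (Representation.irreducible_iff_isSimpleModule_asModule _).mpr inferInstance
  obtain ⟨c, hc⟩ :=
    (Representation.IsIrreducible.algebraMap_intertwiningMap_bijective_of_isAlgClosed
      (ρ := matRep ρ)).2 (intertwiningMapOfMatrix M hM)
  refine ⟨c, Matrix.toLin'.injective (LinearMap.ext fun v => ?_)⟩
  simpa [intertwiningMapOfMatrix] using (congrArg (fun f => f v) hc).symm

variable [Fintype G]

theorem sum_mul_star_eq_zero_of_isEmpty
    [IsSimpleModule (MonoidAlgebra ℂ G) (matRep ρ).asModule]
    [IsSimpleModule (MonoidAlgebra ℂ G) (matRep ψ).asModule]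
    (hψ : ∀ g, ψ g ∈ Matrix.unitaryGroup (Fin p) ℂ)
    (hno : IsEmpty ((matRep ψ).asModule ≃ₗ[MonoidAlgebra ℂ G] (matRep ρ).asModule))
    (i j : Fin m) (k l : Fin p) :
    ∑ g, ρ g i j * star (ψ g k l) = 0 := by
  rw [← sum_mul_single_mul_inv_apply hψ,
    eq_zero_of_intertwines_of_isEmpty hno (intertwines_sum_mul_mul_inv ρ ψ _ ·),
    Matrix.zero_apply]

theorem sum_mul_star_self [IsSimpleModule (MonoidAlgebra ℂ G) (matRep ρ).asModule]
    (hρ : ∀ g, ρ g ∈ Matrix.unitaryGroup (Fin m) ℂ) (i j k l : Fin m) :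
    ∑ g, ρ g i j * star (ρ g k l) =
      if i = k ∧ j = l then (Fintype.card G : ℂ) / m else 0 := by
  obtain ⟨c, hc⟩ := exists_eq_smul_one_of_intertwines
    (intertwines_sum_mul_mul_inv ρ ρ (Matrix.single j l (1 : ℂ)) ·)
  have hm : (m : ℂ) ≠ 0 := Nat.cast_ne_zero.mpr i.pos.ne'
  -- `c` is read off from traces, since conjugation preserves the trace of `single j l 1`
  have hc_eq : c = if j = l then (Fintype.card G : ℂ) / m else 0 := by
    have htrace := congrArg Matrix.trace hc
    simp only [Matrix.trace_sum, Matrix.trace_mul_cycle (ρ _), ← map_mul, inv_mul_cancel,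
      map_one, Matrix.one_mul, Matrix.trace_smul, Matrix.trace_one, Finset.sum_const,
      Finset.card_univ, Fintype.card_fin] at htrace
    split_ifs with hjl
    · subst hjl
      rw [eq_div_iff hm]
      simpa using htrace.symm
    · simpa [Matrix.trace_single_eq_of_ne _ _ _ hjl, hm] using htrace.symm
  rw [← sum_mul_single_mul_inv_apply hρ, hc, hc_eq]
  by_cases hik : i = k <;> by_cases hjl : j = l <;> simp [hik, hjl]

theorem sum_mul_apply_inv_mul_eq_zero_of_isEmpty
    [IsSimpleModule (MonoidAlgebra ℂ G) (matRep ρ).asModule]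
    [IsSimpleModule (MonoidAlgebra ℂ G) (matRep ψ).asModule]
    (hψ : ∀ g, ψ g ∈ Matrix.unitaryGroup (Fin p) ℂ)
    (hno : IsEmpty ((matRep ψ).asModule ≃ₗ[MonoidAlgebra ℂ G] (matRep ρ).asModule))
    (i j : Fin m) (k l : Fin p) (h : G) :
    ∑ g, ρ g i j * ψ (g⁻¹ * h) k l = 0 := by
  simp only [sum_mul_apply_inv_mul hψ, sum_mul_star_eq_zero_of_isEmpty hψ hno, zero_mul,
    Finset.sum_const_zero]

theorem sum_mul_apply_inv_mul_self [IsSimpleModule (MonoidAlgebra ℂ G) (matRep ρ).asModule]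
    (hρ : ∀ g, ρ g ∈ Matrix.unitaryGroup (Fin m) ℂ) (i j k l : Fin m) (h : G) :
    ∑ g, ρ g i j * ρ (g⁻¹ * h) k l =
      if j = k then (Fintype.card G : ℂ) / m * ρ h i l else 0 := by
  rw [sum_mul_apply_inv_mul hρ]
  simp only [sum_mul_star_self hρ, ite_and]
  split_ifs <;> simp_all

end Schur

namespace MonoidAlgebra

variable {R : Type*} [CommSemiring R]

theorem sum_single_mul_sum_single {G : Type*} [Group G] [Fintype G] (f₁ f₂ : G → R) :
    (∑ g, single g (f₁ g)) * (∑ g, single g (f₂ g)) =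
      ∑ h, single h (∑ g, f₁ g * f₂ (g⁻¹ * h)) := by
  have hshift : ∀ g, ∑ g', single (g * g') (f₁ g * f₂ g') =
      ∑ h, single h (f₁ g * f₂ (g⁻¹ * h)) := fun g =>
    Fintype.sum_equiv (Equiv.mulLeft g) _ _ fun g' => by simp
  simp_rw [Finset.sum_mul_sum, single_mul_single, hshift]
  rw [Finset.sum_comm]
  exact Finset.sum_congr rfl fun h _ => (map_sum (singleAddHom h) _ _).symm

theorem list_prod_ofFn_sum_single {M : Type*} [Monoid M] [Fintype M] :
    ∀ {d : ℕ} (f : Fin d → M → R),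
      (List.ofFn fun ℓ => ∑ g, single g (f ℓ g)).prod =
        ∑ x : Fin d → M, single (List.ofFn x).prod (∏ ℓ, f ℓ (x ℓ))
  | 0, f => by simp [one_def]
  | d + 1, f => by
    rw [List.ofFn_succ, List.prod_cons, list_prod_ofFn_sum_single, Finset.sum_mul_sum,
      ← (Fin.consEquiv fun _ => M).sum_comp, Fintype.sum_prod_type]
    simp [single_mul_single, Fin.prod_univ_succ]

variable (R) in
noncomputable def linearCombinationX (M : Type*) : MonoidAlgebra R M →ₗ[R] MvPolynomial M R :=
  Finsupp.linearCombination R MvPolynomial.X ∘ₗ (coeffLinearEquiv R).toLinearMap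

theorem linearCombinationX_single {M : Type*} (g : M) (r : R) :
    linearCombinationX R M (single g r) = r • MvPolynomial.X g := by
  simp [linearCombinationX]

end MonoidAlgebra

open MonoidAlgebra

theorem sum_prod_smul_groupHyper {G : Type*} [Group G] [Fintype G] {d : ℕ}
    (f : Fin d → G → ℂ) :
    ∑ x : Fin d → G, (∏ ℓ, f ℓ (x ℓ)) • groupHyper d G x =
      linearCombinationX ℂ G (List.ofFn fun ℓ => ∑ g, single g (f ℓ g)).prod := by
  simp [list_prod_ofFn_sum_single, linearCombinationX_single, groupHyper]

namespace List

theorem prod_ofFn_eq_zero_of_mul_eq_zero {R : Type*} [MonoidWithZero R] :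
    ∀ {m : ℕ} (x : Fin (m + 1) → R) (ℓ : Fin m), x ℓ.castSucc * x ℓ.succ = 0 →
      (List.ofFn x).prod = 0
  | 0, _, ℓ, _ => ℓ.elim0
  | m + 1, x, ℓ, h => by
    rw [List.ofFn_succ, List.prod_cons]
    cases ℓ using Fin.cases with
    | zero => rw [List.ofFn_succ, List.prod_cons, ← mul_assoc]; simp_all
    | succ ℓ => rw [prod_ofFn_eq_zero_of_mul_eq_zero (fun i => x i.succ) ℓ h, mul_zero]

theorem prod_ofFn_of_mul_eq_ite {R S α : Type*} [CommSemiring S] [Semiring R] [Algebra S R]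
    [DecidableEq α] {E : α → α → R} (c : S)
    (hE : ∀ i j k l, E i j * E k l = if j = k then c • E i l else 0) :
    ∀ {m : ℕ} (a : Fin (m + 1) → α × α),
      (List.ofFn fun ℓ => E (a ℓ).1 (a ℓ).2).prod =
        if ∀ ℓ : Fin m, (a ℓ.castSucc).2 = (a ℓ.succ).1 then
          c ^ m • E (a 0).1 (a (Fin.last m)).2
        else 0
  | 0, a => by simp
  | m + 1, a => by
    rw [List.ofFn_succ, List.prod_cons, prod_ofFn_of_mul_eq_ite c hE (fun ℓ => a ℓ.succ)]
    simp only [Fin.forall_fin_succ (n := m), Fin.castSucc_zero, Fin.succ_zero_eq_one,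
      Fin.succ_castSucc, Fin.succ_last]
    split_ifs <;> simp_all [pow_succ, mul_smul]

end List

theorem Fin.apply_eq_apply_zero_of_forall_castSucc {β : Type*} {m : ℕ} {f : Fin (m + 1) → β}
    (h : ∀ ℓ : Fin m, f ℓ.castSucc = f ℓ.succ) (ℓ : Fin (m + 1)) : f ℓ = f 0 := by
  induction ℓ using Fin.induction with
  | zero => rfl
  | succ ℓ ih => rw [← h ℓ, ih]

theorem exists_eq_sigma_mk_of_fst_eq {ι α : Type*} {β : α → Type*} {k : ι → Σ a, β a} {t : α}
    (h : ∀ ℓ, (k ℓ).1 = t) : ∃ a : ι → β t, k = fun ℓ => ⟨t, a ℓ⟩ :=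
  ⟨fun ℓ => h ℓ ▸ (k ℓ).2, funext fun ℓ => Sigma.ext (h ℓ) (by simp)⟩

theorem inv_pow_mul_self_eq {K : Type*} [Field K] {c : K} (hc : c ≠ 0) {m : ℕ}
    (hm : Even (m + 1)) : c⁻¹ ^ m * c = (c ^ 2)⁻¹ ^ ((m + 1) / 2 - 1) := by
  obtain ⟨q, rfl⟩ : ∃ q, m = 2 * q + 1 := by
    obtain ⟨r, hr⟩ := hm
    exact ⟨r - 1, by omega⟩
  rw [show (2 * q + 1 + 1) / 2 - 1 = q by omega, pow_succ, mul_assoc, inv_mul_cancel₀ hc,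
    mul_one, pow_mul, inv_pow]

section Fourier

variable {G : Type*} [Group G] [Fintype G]

variable (G) in
noncomputable abbrev fourierScale (m : ℕ) : ℂ := (Real.sqrt ((m : ℝ) / (Fintype.card G : ℝ)) : ℂ)

theorem fourierScale_sq (m : ℕ) : fourierScale G m ^ 2 = m / Fintype.card G := by
  rw [← Complex.ofReal_pow, Real.sq_sqrt (by positivity)]
  push_cast
  rfl

theorem fourierScale_ne_zero {m : ℕ} (hm : m ≠ 0) : fourierScale G m ≠ 0 := by
  rw [← pow_ne_zero_iff two_ne_zero, fourierScale_sq]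
  exact div_ne_zero (Nat.cast_ne_zero.mpr hm) (Nat.cast_ne_zero.mpr Fintype.card_ne_zero)

variable {m p : ℕ} {ρ : G →* Matrix (Fin m) (Fin m) ℂ} {ψ : G →* Matrix (Fin p) (Fin p) ℂ}

variable (ρ) in
noncomputable def fourierVec (i j : Fin m) : MonoidAlgebra ℂ G :=
  ∑ g, single g (fourierScale G m * ρ g i j)

theorem fourierVec_mul_fourierVec_eq_zero_of_isEmpty
    [IsSimpleModule (MonoidAlgebra ℂ G) (matRep ρ).asModule]
    [IsSimpleModule (MonoidAlgebra ℂ G) (matRep ψ).asModule]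
    (hψ : ∀ g, ψ g ∈ Matrix.unitaryGroup (Fin p) ℂ)
    (hno : IsEmpty ((matRep ψ).asModule ≃ₗ[MonoidAlgebra ℂ G] (matRep ρ).asModule))
    (i j : Fin m) (k l : Fin p) :
    fourierVec ρ i j * fourierVec ψ k l = 0 := by
  simp_rw [fourierVec, sum_single_mul_sum_single, mul_mul_mul_comm, ← Finset.mul_sum,
    sum_mul_apply_inv_mul_eq_zero_of_isEmpty hψ hno, mul_zero, single_zero,
    Finset.sum_const_zero]

theorem fourierVec_mul_fourierVec [IsSimpleModule (MonoidAlgebra ℂ G) (matRep ρ).asModule]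
    (hρ : ∀ g, ρ g ∈ Matrix.unitaryGroup (Fin m) ℂ) (i j k l : Fin m) :
    fourierVec ρ i j * fourierVec ρ k l =
      if j = k then (fourierScale G m)⁻¹ • fourierVec ρ i l else 0 := by
  have hm : (m : ℂ) ≠ 0 := Nat.cast_ne_zero.mpr i.pos.ne'
  have hG : (Fintype.card G : ℂ) ≠ 0 := Nat.cast_ne_zero.mpr Fintype.card_ne_zero
  simp_rw [fourierVec, sum_single_mul_sum_single, mul_mul_mul_comm, ← Finset.mul_sum,
    sum_mul_apply_inv_mul_self hρ]
  split_ifs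
  · rw [Finset.smul_sum]
    refine Finset.sum_congr rfl fun h _ => ?_
    rw [smul_single', ← mul_assoc, ← mul_assoc, ← pow_two, fourierScale_sq,
      inv_mul_cancel₀ (fourierScale_ne_zero i.pos.ne')]
    congr 1
    field_simp
  · simp

variable (ρ) in
theorem linearCombinationX_fourierVec (i j : Fin m) :
    linearCombinationX ℂ G (fourierVec ρ i j) =
      MvPolynomial.C (fourierScale G m) * repMatrix ρ i j := by
  simp [fourierVec, repMatrix, linearCombinationX_single, Matrix.sum_apply, Finset.mul_sum,
    MvPolynomial.smul_eq_C_mul, mul_comm, mul_left_comm]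

theorem linearCombinationX_list_prod_ofFn_fourierVec
    [IsSimpleModule (MonoidAlgebra ℂ G) (matRep ρ).asModule]
    (hρ : ∀ g, ρ g ∈ Matrix.unitaryGroup (Fin m) ℂ) {d : ℕ} (hd : Even (d + 1))
    (a : Fin (d + 1) → Fin m × Fin m) :
    linearCombinationX ℂ G (List.ofFn fun ℓ => fourierVec ρ (a ℓ).1 (a ℓ).2).prod =
      if ∀ ℓ : Fin d, (a ℓ.castSucc).2 = (a ℓ.succ).1 then
        MvPolynomial.C (((Fintype.card G : ℂ) / m) ^ ((d + 1) / 2 - 1)) *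
          repMatrix ρ (a 0).1 (a (Fin.last d)).2
      else 0 := by
  rw [List.prod_ofFn_of_mul_eq_ite _ (fourierVec_mul_fourierVec hρ)]
  split_ifs
  · rw [map_smul, linearCombinationX_fourierVec, MvPolynomial.smul_eq_C_mul, ← mul_assoc,
      ← MvPolynomial.C_mul, inv_pow_mul_self_eq (fourierScale_ne_zero (a 0).1.pos.ne') hd,
      fourierScale_sq, inv_div]
  · exact map_zero _

variable {T : Type*}

noncomputable def fourierMatrix (n : T → ℕ) (ρ : ∀ t, G →* Matrix (Fin (n t)) (Fin (n t)) ℂ) :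
    Matrix (Σ t : T, Fin (n t) × Fin (n t)) G ℂ :=
  fun s g => fourierScale G (n s.1) * ρ s.1 g s.2.1 s.2.2

open Classical in
theorem fourierMatrix_mul_conjTranspose [Fintype T] {n : T → ℕ}
    {ρ : ∀ t, G →* Matrix (Fin (n t)) (Fin (n t)) ℂ} (hρ : IsCompleteIrrFamily G n ρ) :
    fourierMatrix n ρ * (fourierMatrix n ρ).conjTranspose = 1 := by
  ext ⟨t, i, j⟩ ⟨t', k, l⟩
  have := hρ.irred t
  have := hρ.irred t'
  simp only [Matrix.mul_apply, Matrix.conjTranspose_apply, fourierMatrix, star_mul',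
    mul_mul_mul_comm, ← Finset.mul_sum]
  by_cases ht : t = t'
  · subst ht
    have hn : (n t : ℂ) ≠ 0 := Nat.cast_ne_zero.mpr i.pos.ne'
    have hG : (Fintype.card G : ℂ) ≠ 0 := Nat.cast_ne_zero.mpr Fintype.card_ne_zero
    rw [sum_mul_star_self (hρ.unitary t), Complex.star_def, Complex.conj_ofReal, ← pow_two,
      fourierScale_sq, Matrix.one_apply]
    split_ifs <;> simp_all
  · rw [sum_mul_star_eq_zero_of_isEmpty (hρ.unitary t') (hρ.noniso t' t (Ne.symm ht)),
      mul_zero, Matrix.one_apply_ne (by simp [ht])]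

end Fourier

open Classical in
/-- **Tensor block-diagonalization of the group hypermatrix.** The group Fourier transform
matrix `U`, `U_{(t,i,j),g} = (n_t/|G|)^{1/2} ρ_t(g)_{ij}`, is unitary, and applying it to
every mode of `C^G(x)` yields the block-diagonal hypermatrix with blocks
`(|G|/n_t)^{d/2-1} · M^{(d)}_{ρ_t(x)}`: the entry at `((t₁,i₁,j₁),…,(t_d,i_d,j_d))` is
`(|G|/n_t)^{d/2-1} (Σ_g x_g ρ_t(g))_{i₁ j_d}` when `t₁ = ⋯ = t_d = t` and
`j₁ = i₂, …, j_{d-1} = i_d`, and `0` otherwise. -/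
theorem group_hypermatrix_block_diagonalization (d : ℕ) (hd : 2 ≤ d) (hde : Even d)
    (G : Type*) [Group G] [Fintype G]
    (T : Type*) [Fintype T] (n : T → ℕ)
    (ρ : ∀ t, G →* Matrix (Fin (n t)) (Fin (n t)) ℂ)
    (hρ : IsCompleteIrrFamily G n ρ) :
    let U : Matrix (Σ t : T, Fin (n t) × Fin (n t)) G ℂ :=
      fun s g => (Real.sqrt ((n s.1 : ℝ) / (Fintype.card G : ℝ)) : ℂ) * ρ s.1 g s.2.1 s.2.2
    U * U.conjTranspose = 1 ∧
    ∀ k : Fin d → Σ t : T, Fin (n t) × Fin (n t),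
      (∑ g : Fin d → G, (∏ ℓ, U (k ℓ) (g ℓ)) • groupHyper d G g) =
        if h : (∀ ℓ, (k ℓ).1 = (k ⟨0, by omega⟩).1) ∧
            ∀ (ℓ : ℕ) (hℓ : ℓ + 1 < d),
              (((k ⟨ℓ, by omega⟩).2.2 : ℕ) = ((k ⟨ℓ + 1, hℓ⟩).2.1 : ℕ))
        then MvPolynomial.C (((Fintype.card G : ℂ) / (n (k ⟨0, by omega⟩).1 : ℂ)) ^ (d / 2 - 1)) *
          repMatrix (ρ (k ⟨0, by omega⟩).1) (k ⟨0, by omega⟩).2.1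
            (Fin.cast (congrArg n (h.1 ⟨d - 1, by omega⟩)) (k ⟨d - 1, by omega⟩).2.2)
        else 0 := by
  intro U
  refine ⟨fourierMatrix_mul_conjTranspose hρ, fun k => ?_⟩
  obtain ⟨m, rfl⟩ : ∃ m, d = m + 1 := ⟨d - 1, by omega⟩
  have hrow : ∀ s, ∑ g, single g (U s g) = fourierVec (ρ s.1) s.2.1 s.2.2 := fun s => rfl
  simp only [sum_prod_smul_groupHyper, hrow]
  by_cases hblock : ∀ ℓ : Fin m, (k ℓ.castSucc).1 = (k ℓ.succ).1
  · have hblock' := Fin.apply_eq_apply_zero_of_forall_castSucc (f := fun ℓ => (k ℓ).1) hblock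
    generalize (k 0).1 = t at hblock'
    obtain ⟨a, rfl⟩ := exists_eq_sigma_mk_of_fst_eq hblock'
    have := hρ.irred t
    have hchain : (∀ ℓ : Fin m, (a ℓ.castSucc).2 = (a ℓ.succ).1) ↔
        ∀ (ℓ : ℕ) (hℓ : ℓ + 1 < m + 1), ((a ⟨ℓ, by omega⟩).2 : ℕ) = (a ⟨ℓ + 1, hℓ⟩).1 :=
      ⟨fun h ℓ hℓ => congrArg Fin.val (h ⟨ℓ, by omega⟩), fun h ℓ => Fin.ext (h ℓ (by omega))⟩
    rw [linearCombinationX_list_prod_ofFn_fourierVec (hρ.unitary t) hde]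
    simp only [hchain, forall_const, true_and]
    split_ifs <;> rfl
  · push Not at hblock
    obtain ⟨ℓ, hℓ⟩ := hblock
    have := hρ.irred (k ℓ.castSucc).1
    have := hρ.irred (k ℓ.succ).1
    rw [List.prod_ofFn_eq_zero_of_mul_eq_zero _ ℓ, map_zero, dif_neg]
    · exact fun h => hℓ ((h.1 _).trans (h.1 _).symm)
    · exact fourierVec_mul_fourierVec_eq_zero_of_isEmpty (hρ.unitary _)
        (hρ.noniso _ _ hℓ.symm) _ _ _ _
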